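/- arXiv:hep-th/0104147 — 2 statements merged into one kernel-verified Lean document; each statement's English description precedes it below -/
import Mathlib

section
/- For a regular sequence (x₁, ..., xₙ) in a commutative ring R, the Koszul complex K(x₁, ..., xₙ) is a free resolution of R/(x₁, ..., xₙ), i.e., its homology vanishes in positive degrees and equals R/(x₁, ..., xₙ) in degree zero. -/
open Finset

noncomputable section

/-- The degree-`i` term of the Koszul complex on `n` elements: the free module with basis
the `i`-element subsets of `Fin n` (a model for the `i`-th exterior power of `Rⁿ`). -/
abbrev KoszulTerm (R : Type*) [CommRing R] (n i : ℕ) :=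
  {s : Finset (Fin n) // s.card = i} → R

/-- The Koszul differential (contraction against `(x₁, …, xₙ)`):
`(d f)(s) = ∑_{j ∉ s} (-1)^{#{k ∈ s ∣ k < j}} xⱼ · f(s ∪ {j})`. -/
noncomputable def koszulDiff {R : Type*} [CommRing R] {n : ℕ} (x : Fin n → R) (i : ℕ) :
    KoszulTerm R n (i + 1) →ₗ[R] KoszulTerm R n i :=
  LinearMap.pi fun s => ∑ j : Fin n,
    if h : j ∈ s.val then 0
    else ((-1 : R) ^ (s.val.filter (· < j)).card * x j) •
      LinearMap.proj (⟨insert j s.val, by rw [Finset.card_insert_of_notMem h, s.2]⟩ :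
        {t : Finset (Fin n) // t.card = i + 1})

/-- The augmentation `K₀ → R/(x₁, …, xₙ)`. -/
noncomputable def koszulAugment {R : Type*} [CommRing R] {n : ℕ} (x : Fin n → R) :
    KoszulTerm R n 0 → R ⧸ Ideal.span (Set.range x) :=
  fun f => Ideal.Quotient.mk _ (f ⟨∅, by simp⟩)

namespace K6

variable {R : Type*} [CommRing R] {n : ℕ}

lemma koszulDiff_apply (x : Fin n → R) (i : ℕ) (f : KoszulTerm R n (i + 1))
    (s : {s : Finset (Fin n) // s.card = i}) :
    koszulDiff x i f s = ∑ j : Fin n,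
      if h : j ∈ s.val then 0
      else ((-1 : R) ^ (s.val.filter (· < j)).card * x j) *
        f ⟨insert j s.val, by rw [Finset.card_insert_of_notMem h, s.2]⟩ := by
  simp only [koszulDiff, LinearMap.pi_apply, LinearMap.sum_apply]
  refine Finset.sum_congr rfl fun j _ => ?_
  by_cases h : j ∈ s.val
  · simp [h]
  · simp [h]



variable {R : Type*} [CommRing R] {n : ℕ}

def up (s : Finset (Fin n)) : Finset (Fin (n + 1)) := s.map Fin.castSuccEmb

@[simp] lemma castSuccEmb_apply (j : Fin n) : Fin.castSuccEmb j = j.castSucc := rfl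

noncomputable def down (s : Finset (Fin (n + 1))) : Finset (Fin n) :=
  s.preimage Fin.castSucc (Fin.castSucc_injective n).injOn

@[simp] lemma card_up (s : Finset (Fin n)) : (up s).card = s.card := Finset.card_map _

@[simp] lemma mem_up {j : Fin n} {s : Finset (Fin n)} : j.castSucc ∈ up s ↔ j ∈ s := by
  exact Finset.mem_map' _

@[simp] lemma last_not_mem_up (s : Finset (Fin n)) : Fin.last n ∉ up s := by
  simp only [up, Finset.mem_map]
  rintro ⟨a, -, ha⟩
  exact (Fin.castSucc_lt_last a).ne ha

@[simp] lemma mem_down {j : Fin n} {s : Finset (Fin (n + 1))} :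
    j ∈ down s ↔ j.castSucc ∈ s := Finset.mem_preimage

@[simp] lemma down_up (s : Finset (Fin n)) : down (up s) = s := by
  ext j; simp

lemma up_down {s : Finset (Fin (n + 1))} (h : Fin.last n ∉ s) : up (down s) = s := by
  ext j
  refine Fin.lastCases ?_ (fun k => ?_) j
  · simp [h]
  · simp

lemma card_down {s : Finset (Fin (n + 1))} (h : Fin.last n ∉ s) : (down s).card = s.card := by
  conv_rhs => rw [← up_down h]
  rw [card_up]

lemma up_insert (j : Fin n) (s : Finset (Fin n)) :
    up (insert j s) = insert j.castSucc (up s) := by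
  simp only [up, Finset.map_insert, castSuccEmb_apply]

lemma card_filter_up (s : Finset (Fin n)) (j : Fin n) :
    ((up s).filter (· < j.castSucc)).card = (s.filter (· < j)).card := by
  rw [up, Finset.filter_map, Finset.card_map]
  exact congrArg Finset.card <| Finset.filter_congr fun a _ => by
    simp [Fin.castSucc_lt_castSucc_iff]

lemma filter_lt_last (s : Finset (Fin n)) :
    (up s).filter (· < Fin.last n) = up s :=
  Finset.filter_true_of_mem fun a ha => by
    rcases Finset.mem_map.mp ha with ⟨b, -, rfl⟩
    exact Fin.castSucc_lt_last b

lemma card_filter_insert_last (s : Finset (Fin n)) (j : Fin n) :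
    ((insert (Fin.last n) (up s)).filter (· < j.castSucc)).card
      = (s.filter (· < j)).card := by
  rw [Finset.filter_insert, if_neg (by exact (Fin.castSucc_lt_last j).asymm),
    card_filter_up]

lemma mem_insert_last {j : Fin n} {s : Finset (Fin n)} :
    j.castSucc ∈ insert (Fin.last n) (up s) ↔ j ∈ s := by
  simp [Finset.mem_insert, (Fin.castSucc_lt_last j).ne]



def mapA (i : ℕ) (f : KoszulTerm R (n + 1) i) : KoszulTerm R n i :=
  fun s => f ⟨up s.1, by rw [card_up, s.2]⟩

def mapB (i : ℕ) (f : KoszulTerm R (n + 1) (i + 1)) : KoszulTerm R n i :=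
  fun s => f ⟨insert (Fin.last n) (up s.1), by
    rw [Finset.card_insert_of_notMem (last_not_mem_up _), card_up, s.2]⟩

def glue (i : ℕ) (a : KoszulTerm R n (i + 1)) (b : KoszulTerm R n i) :
    KoszulTerm R (n + 1) (i + 1) :=
  fun t => if h : Fin.last n ∈ t.1 then
      b ⟨down (t.1.erase (Fin.last n)), by
        rw [card_down (Finset.notMem_erase _ _), Finset.card_erase_of_mem h, t.2]; omega⟩
    else a ⟨down t.1, by rw [card_down h, t.2]⟩

lemma mapA_glue (i : ℕ) (a : KoszulTerm R n (i + 1)) (b : KoszulTerm R n i) :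
    mapA (i + 1) (glue i a b) = a := by
  funext s
  rw [mapA, glue, dif_neg (last_not_mem_up _)]
  exact congrArg a (Subtype.ext (down_up s.1))

lemma mapB_glue (i : ℕ) (a : KoszulTerm R n (i + 1)) (b : KoszulTerm R n i) :
    mapB i (glue i a b) = b := by
  funext s
  rw [mapB, glue, dif_pos (Finset.mem_insert_self _ _)]
  refine congrArg b (Subtype.ext ?_)
  show down ((insert (Fin.last n) (up s.1)).erase (Fin.last n)) = s.1
  rw [Finset.erase_insert (last_not_mem_up _), down_up]

lemma glue_mapAB (i : ℕ) (f : KoszulTerm R (n + 1) (i + 1)) :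
    glue i (mapA (i + 1) f) (mapB i f) = f := by
  funext t
  rw [glue]
  by_cases h : Fin.last n ∈ t.1
  · rw [dif_pos h, mapB]
    refine congrArg f (Subtype.ext ?_)
    show insert (Fin.last n) (up (down (t.1.erase (Fin.last n)))) = t.1
    rw [up_down (Finset.notMem_erase _ _), Finset.insert_erase h]
  · rw [dif_neg h, mapA]
    exact congrArg f (Subtype.ext (up_down h))

@[simp] lemma mapA_zero (i : ℕ) : mapA i (0 : KoszulTerm R (n + 1) i) = 0 := rfl
@[simp] lemma mapB_zero (i : ℕ) : mapB i (0 : KoszulTerm R (n + 1) (i + 1)) = 0 := rfl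

lemma glue_zero (i : ℕ) : glue i (0 : KoszulTerm R n (i + 1)) 0 = 0 := by
  funext t
  rw [glue]
  split <;> rfl

lemma eq_zero_of_mapAB {i : ℕ} {f : KoszulTerm R (n + 1) (i + 1)}
    (hA : mapA (i + 1) f = 0) (hB : mapB i f = 0) : f = 0 := by
  rw [← glue_mapAB i f, hA, hB, glue_zero]

lemma eq_zero_of_mapA0 {f : KoszulTerm R (n + 1) 0} (h : mapA 0 f = 0) : f = 0 := by
  funext s
  obtain ⟨s, hs⟩ := s
  obtain rfl := Finset.card_eq_zero.mp hs
  calc f ⟨∅, hs⟩ = f ⟨up ∅, by rw [card_up]; exact Finset.card_empty⟩ :=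
        congrArg f (Subtype.ext (Finset.map_empty _).symm)
    _ = mapA 0 f ⟨∅, Finset.card_empty⟩ := rfl
    _ = 0 := congrFun h _

lemma mapA_koszulDiff (x : Fin (n + 1) → R) (i : ℕ) (f : KoszulTerm R (n + 1) (i + 1)) :
    mapA i (koszulDiff x i f) =
      koszulDiff (fun j : Fin n => x j.castSucc) i (mapA (i + 1) f)
        + ((-1 : R) ^ i * x (Fin.last n)) • mapB i f := by
  funext s
  simp only [mapA, mapB, koszulDiff_apply, Pi.add_apply, Pi.smul_apply, smul_eq_mul]
  rw [Fin.sum_univ_castSucc]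
  congr 1
  · refine Finset.sum_congr rfl fun j _ => ?_
    by_cases hj : j ∈ s.1
    · rw [dif_pos (mem_up.mpr hj), dif_pos hj]
    · rw [dif_neg hj, dif_neg (fun hm => hj (mem_up.mp hm))]
      have hc : ((up s.1).filter (· < j.castSucc)).card = (s.1.filter (· < j)).card :=
        card_filter_up s.1 j
      have ht : (⟨insert j.castSucc (up s.1), by
            rw [Finset.card_insert_of_notMem (fun hm => hj (mem_up.mp hm)), card_up, s.2]⟩ :
          {t : Finset (Fin (n + 1)) // t.card = i + 1})
          = ⟨up (insert j s.1), by
            rw [card_up, Finset.card_insert_of_notMem hj, s.2]⟩ :=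
        Subtype.ext (up_insert j s.1).symm
      rw [hc, ht]
  · rw [dif_neg (last_not_mem_up _)]
    have hc : ((up s.1).filter (· < Fin.last n)).card = i := by
      rw [filter_lt_last, card_up, s.2]
    rw [hc]

lemma mapB_koszulDiff (x : Fin (n + 1) → R) (i : ℕ) (f : KoszulTerm R (n + 1) (i + 2)) :
    mapB i (koszulDiff x (i + 1) f) =
      koszulDiff (fun j : Fin n => x j.castSucc) i (mapB (i + 1) f) := by
  funext s
  simp only [mapB, koszulDiff_apply]
  rw [Fin.sum_univ_castSucc, dif_pos (Finset.mem_insert_self _ _), add_zero]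
  refine Finset.sum_congr rfl fun j _ => ?_
  by_cases hj : j ∈ s.1
  · rw [dif_pos (mem_insert_last.mpr hj), dif_pos hj]
  · rw [dif_neg (fun hm => hj (mem_insert_last.mp hm)), dif_neg hj]
    have hc := card_filter_insert_last s.1 j
    have ht : (⟨insert j.castSucc (insert (Fin.last n) (up s.1)), by
          rw [Finset.card_insert_of_notMem (fun hm => hj (mem_insert_last.mp hm)),
            Finset.card_insert_of_notMem (last_not_mem_up _), card_up, s.2]⟩ :
        {t : Finset (Fin (n + 1)) // t.card = i + 2})
        = ⟨insert (Fin.last n) (up (insert j s.1)), by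
          rw [Finset.card_insert_of_notMem (last_not_mem_up _), card_up,
            Finset.card_insert_of_notMem hj, s.2]⟩ := by
      refine Subtype.ext ?_
      show insert j.castSucc (insert (Fin.last n) (up s.1))
        = insert (Fin.last n) (up (insert j s.1))
      rw [up_insert, Finset.insert_comm]
    rw [hc, ht]

lemma koszulTerm_zero_eq_zero {i : ℕ} (f : KoszulTerm R 0 (i + 1)) : f = 0 := by
  funext s
  have hne : s.1.Nonempty := Finset.card_pos.mp (by rw [s.2]; omega)
  exact hne.choose.elim0

lemma dd : ∀ {n : ℕ} (x : Fin n → R) (i : ℕ) (f : KoszulTerm R n (i + 2)),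
    koszulDiff x i (koszulDiff x (i + 1) f) = 0 := by
  intro n
  induction n with
  | zero =>
    intro x i f
    rw [koszulTerm_zero_eq_zero (koszulDiff x (i + 1) f), map_zero]
  | succ n ih =>
    intro x i f
    have hA : mapA i (koszulDiff x i (koszulDiff x (i + 1) f)) = 0 := by
      rw [mapA_koszulDiff x i, mapA_koszulDiff x (i + 1), mapB_koszulDiff x i,
        map_add, map_smul, ih, zero_add, ← add_smul,
        show ((-1 : R) ^ (i + 1) * x (Fin.last n) + (-1 : R) ^ i * x (Fin.last n)) = 0
          by ring,
        zero_smul]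
    match i with
    | 0 => exact eq_zero_of_mapA0 hA
    | k + 1 =>
      refine eq_zero_of_mapAB hA ?_
      rw [mapB_koszulDiff x k, mapB_koszulDiff x (k + 1), ih]

def sing (c : Fin n → R) : KoszulTerm R n 1 :=
  fun s => c (Finset.card_eq_one.mp s.2).choose

lemma sing_apply (c : Fin n → R) (j : Fin n) (s : {s : Finset (Fin n) // s.card = 1})
    (hj : s.1 = {j}) : sing c s = c j := by
  have hch := (Finset.card_eq_one.mp s.2).choose_spec
  exact congrArg c (Finset.singleton_inj.mp ((hj.symm.trans hch)).symm)

lemma exact_aug (x : Fin n → R) :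
    Function.Exact (koszulDiff x 0) (koszulAugment x) := by
  intro f
  constructor
  · intro h0
    have hmem : f ⟨∅, by simp⟩ ∈ Ideal.span (Set.range x) :=
      Ideal.Quotient.eq_zero_iff_mem.mp h0
    obtain ⟨c, hc⟩ := (Submodule.mem_span_range_iff_exists_fun R).mp hmem
    refine ⟨sing c, ?_⟩
    funext s
    obtain ⟨s, hs⟩ := s
    obtain rfl := Finset.card_eq_zero.mp hs
    have key : ∀ (j : Fin n) (pf : (insert j (∅ : Finset (Fin n))).card = 0 + 1),
        sing c ⟨insert j ∅, pf⟩ = c j := fun j pf =>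
      sing_apply c j ⟨insert j ∅, pf⟩ (Finset.insert_empty)
    calc koszulDiff x 0 (sing c) ⟨∅, hs⟩ = ∑ j : Fin n, c j * x j := by
          rw [koszulDiff_apply]
          refine Finset.sum_congr rfl fun j _ => ?_
          rw [dif_neg (Finset.notMem_empty j), key j, Finset.filter_empty,
            Finset.card_empty, pow_zero, one_mul, mul_comm]
      _ = f ⟨∅, hs⟩ := by simpa [smul_eq_mul] using hc
  · rintro ⟨g, rfl⟩
    have hmem : (koszulDiff x 0 g) ⟨∅, by simp⟩ ∈ Ideal.span (Set.range x) := by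
      rw [koszulDiff_apply]
      refine Ideal.sum_mem _ fun j _ => ?_
      rw [dif_neg (Finset.notMem_empty j)]
      exact Ideal.mul_mem_right _ _
        (Ideal.mul_mem_left _ _ (Ideal.subset_span ⟨j, rfl⟩))
    exact Ideal.Quotient.eq_zero_iff_mem.mpr hmem

lemma aug_surjective (x : Fin n → R) : Function.Surjective (koszulAugment x) := by
  intro q
  obtain ⟨r, rfl⟩ := Ideal.Quotient.mk_surjective q
  exact ⟨fun _ => r, rfl⟩

open RingTheory.Sequence in
lemma koszul_exact : ∀ {n : ℕ} (x : Fin n → R),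
    IsWeaklyRegular R (List.ofFn x) →
    ∀ i : ℕ, Function.Exact (koszulDiff x (i + 1)) (koszulDiff x i) := by
  intro n
  induction n with
  | zero =>
    intro x _ i f
    have hf : f = 0 := koszulTerm_zero_eq_zero f
    constructor
    · intro _
      exact ⟨0, by rw [map_zero, hf]⟩
    · intro _
      rw [hf, map_zero]
  | succ n ih =>
    intro x hx i
    have hofn : List.ofFn x = List.ofFn (fun j : Fin n => x j.castSucc) ++ [x (Fin.last n)] := by
      rw [List.ofFn_succ', List.concat_eq_append]
    rw [hofn, isWeaklyRegular_append_iff] at hx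
    obtain ⟨hx', hy0⟩ := hx
    rw [isWeaklyRegular_singleton_iff] at hy0
    have hIdl : (Ideal.ofList (List.ofFn fun j : Fin n => x j.castSucc) • ⊤ : Submodule R R)
        = Ideal.span (Set.range (fun j : Fin n => x j.castSucc)) := by
      rw [Ideal.smul_eq_mul, Ideal.mul_top]
      exact congrArg Ideal.span (Set.ext fun a => List.mem_ofFn)
    rw [hIdl] at hy0
    have hy : ∀ r : R, x (Fin.last n) * r ∈ Ideal.span (Set.range fun j : Fin n => x j.castSucc) →
        r ∈ Ideal.span (Set.range fun j : Fin n => x j.castSucc) := by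
      intro r hr
      have h1 : x (Fin.last n) • (Submodule.Quotient.mk r :
          R ⧸ Ideal.span (Set.range fun j : Fin n => x j.castSucc)) = x (Fin.last n) • 0 := by
        rw [smul_zero, ← Submodule.Quotient.mk_smul, smul_eq_mul]
        exact (Submodule.Quotient.mk_eq_zero _).mpr hr
      have h2 := hy0 h1
      exact (Submodule.Quotient.mk_eq_zero _).mp h2
    intro f
    constructor
    · intro hf
      -- f : KoszulTerm R (n+1) (i+1), hf : koszulDiff x i f = 0
      have h1 : koszulDiff (fun j : Fin n => x j.castSucc) i (mapA (i + 1) f)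
          + ((-1 : R) ^ i * x (Fin.last n)) • mapB i f = 0 := by
        rw [← mapA_koszulDiff x i f, hf, mapA_zero]
      have hbrange : ∃ c, koszulDiff (fun j : Fin n => x j.castSucc) i c = mapB i f := by
        cases i with
        | zero =>
          -- use augmentation exactness and regularity of last element
          have hda : koszulAugment (fun j : Fin n => x j.castSucc)
              (koszulDiff (fun j : Fin n => x j.castSucc) 0 (mapA 1 f)) = 0 :=
            (exact_aug _ _).mpr ⟨mapA 1 f, rfl⟩
          have hval : (koszulDiff (fun j : Fin n => x j.castSucc) 0 (mapA 1 f)) ⟨∅, by simp⟩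
              + ((-1 : R) ^ 0 * x (Fin.last n)) * (mapB 0 f) ⟨∅, by simp⟩ = 0 := by
            have := congrFun h1 ⟨∅, by simp⟩
            simpa using this
          have hmem : x (Fin.last n) * (mapB 0 f) ⟨∅, by simp⟩
              ∈ Ideal.span (Set.range fun j : Fin n => x j.castSucc) := by
            have hda' : (koszulDiff (fun j : Fin n => x j.castSucc) 0 (mapA 1 f)) ⟨∅, by simp⟩
                ∈ Ideal.span (Set.range fun j : Fin n => x j.castSucc) :=
              Ideal.Quotient.eq_zero_iff_mem.mp hda
            have : x (Fin.last n) * (mapB 0 f) ⟨∅, by simp⟩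
                = -((koszulDiff (fun j : Fin n => x j.castSucc) 0 (mapA 1 f)) ⟨∅, by simp⟩) := by
              rw [eq_neg_iff_add_eq_zero, add_comm]
              simpa using hval
            rw [this]
            exact neg_mem hda'
          have hb0 : koszulAugment (fun j : Fin n => x j.castSucc) (mapB 0 f) = 0 :=
            Ideal.Quotient.eq_zero_iff_mem.mpr (hy _ hmem)
          exact (exact_aug _ _).mp hb0
        | succ k =>
          have h2 : koszulDiff (fun j : Fin n => x j.castSucc) k (mapB (k + 1) f) = 0 := by
            rw [← mapB_koszulDiff x k f, hf, mapB_zero]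
          exact (ih (fun j : Fin n => x j.castSucc) hx' k _).mp h2
      obtain ⟨c, hc⟩ := hbrange
      have h4 : koszulDiff (fun j : Fin n => x j.castSucc) i
          (mapA (i + 1) f + ((-1 : R) ^ i * x (Fin.last n)) • c) = 0 := by
        rw [map_add, map_smul, hc]
        simpa using h1
      obtain ⟨a', ha'⟩ := (ih (fun j : Fin n => x j.castSucc) hx' i _).mp h4
      refine ⟨glue (i + 1) a' c, ?_⟩
      have e1 : mapA (i + 1) (koszulDiff x (i + 1) (glue (i + 1) a' c)) = mapA (i + 1) f := by
        rw [mapA_koszulDiff x (i + 1), mapA_glue, mapB_glue, ha', add_assoc, ← add_smul,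
          show ((-1 : R) ^ i * x (Fin.last n) + (-1 : R) ^ (i + 1) * x (Fin.last n)) = 0
            by ring,
          zero_smul, add_zero]
      have e2 : mapB i (koszulDiff x (i + 1) (glue (i + 1) a' c)) = mapB i f := by
        rw [mapB_koszulDiff x i, mapB_glue, hc]
      calc koszulDiff x (i + 1) (glue (i + 1) a' c)
          = glue i (mapA (i + 1) (koszulDiff x (i + 1) (glue (i + 1) a' c)))
              (mapB i (koszulDiff x (i + 1) (glue (i + 1) a' c))) := (glue_mapAB i _).symm
        _ = glue i (mapA (i + 1) f) (mapB i f) := by rw [e1, e2]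
        _ = f := glue_mapAB i f
    · rintro ⟨g, rfl⟩
      exact dd x i g

end K6

/-- For a regular sequence `(x₁, …, xₙ)` in a commutative ring `R`, the
Koszul complex `K(x₁, …, xₙ)` is a free resolution of `R/(x₁, …, xₙ)`: its homology
vanishes in positive degrees, and in degree zero it is `R/(x₁, …, xₙ)`. -/
theorem koszulComplex_isFreeResolution_of_isRegular
    {R : Type*} [CommRing R] {n : ℕ} (x : Fin n → R)
    (hreg : RingTheory.Sequence.IsRegular R (List.ofFn x)) :
    (∀ i : ℕ, Function.Exact (koszulDiff x (i + 1)) (koszulDiff x i)) ∧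
    Function.Exact (koszulDiff x 0) (koszulAugment x) ∧
    Function.Surjective (koszulAugment x) :=
  ⟨K6.koszul_exact x hreg.toIsWeaklyRegular, K6.exact_aug x, K6.aug_surjective x⟩

end
end

section
/- Let A be an abelian category and let f : E•₁ → E•₂ be a quasi-isomorphism of bounded complexes. Then for every complex F• of injective objects which is bounded below, the induced map on homotopy classes of chain maps f* : [E•₂, F•] → [E•₁, F•] is a bijection. -/
open CategoryTheory CategoryTheory.Limits

namespace QIHelper

variable {A : Type*} [Category A] [Abelian A]
variable {K F : CochainComplex A ℤ}

/-- One step of the inductive construction of a null-homotopy: given the component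
`φ : K.X m ⟶ F.X (m - 1)` of a partial homotopy, construct the next component, using
exactness of `K` at `m` and injectivity of `F.X m`. -/
noncomputable def nextMap (g : K ⟶ F) (hFinj : ∀ n : ℤ, Injective (F.X n))
    (hK : ∀ n : ℤ, K.ExactAt n) (m q : ℤ) (hq : m + 1 = q)
    (φ : K.X m ⟶ F.X (m - 1))
    (hyp : K.d (m - 1) m ≫ (g.f m - φ ≫ F.d (m - 1) m) = 0) :
    {ψ : K.X q ⟶ F.X m // K.d m q ≫ ψ = g.f m - φ ≫ F.d (m - 1) m} := by
  have hex : (K.sc' (m - 1) m q).Exact := by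
    rw [← K.exactAt_iff' (m - 1) m q
      ((ComplexShape.up ℤ).prev_eq' (by simp only [ComplexShape.up_Rel]; omega))
      ((ComplexShape.up ℤ).next_eq' (by simp only [ComplexShape.up_Rel]; omega))]
    exact hK m
  have := hFinj m
  exact ⟨hex.descToInjective (g.f m - φ ≫ F.d (m - 1) m) hyp,
    hex.comp_descToInjective _ _⟩

/-- The coherent family of components of the null-homotopy, constructed by
well-founded recursion starting below the bound `a` of the bounded-below
acyclic complex `K`. -/
noncomputable def hFam (g : K ⟶ F) (hFinj : ∀ n : ℤ, Injective (F.X n))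
    (hK : ∀ n : ℤ, K.ExactAt n) (a : ℤ) (hKb : ∀ n : ℤ, n < a → IsZero (K.X n))
    (n : ℤ) :
    {φ : K.X n ⟶ F.X (n - 1) // K.d (n - 1) n ≫ (g.f n - φ ≫ F.d (n - 1) n) = 0} :=
  if hn : a < n then
    ⟨(nextMap g hFinj hK (n - 1) n (by omega)
        (hFam g hFinj hK a hKb (n - 1)).1 (hFam g hFinj hK a hKb (n - 1)).2).1, by
      have hs := (nextMap g hFinj hK (n - 1) n (by omega)
        (hFam g hFinj hK a hKb (n - 1)).1 (hFam g hFinj hK a hKb (n - 1)).2).2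
      rw [Preadditive.comp_sub, ← Category.assoc, hs, Preadditive.sub_comp,
        Category.assoc, HomologicalComplex.d_comp_d, comp_zero, sub_zero,
        ← g.comm, sub_self]⟩
  else
    ⟨0, by
      rw [(hKb (n - 1) (by omega)).eq_of_src (K.d (n - 1) n) 0, zero_comp]⟩
termination_by (n - a).toNat
decreasing_by omega

lemma hFam_spec (g : K ⟶ F) (hFinj : ∀ n : ℤ, Injective (F.X n))
    (hK : ∀ n : ℤ, K.ExactAt n) (a : ℤ) (hKb : ∀ n : ℤ, n < a → IsZero (K.X n))
    (n : ℤ) (hn : a < n) :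
    K.d (n - 1) n ≫ (hFam g hFinj hK a hKb n).1 =
      g.f (n - 1) - (hFam g hFinj hK a hKb (n - 1)).1 ≫ F.d (n - 1 - 1) (n - 1) := by
  conv_lhs => rw [hFam.eq_def, dif_pos hn]
  exact (nextMap g hFinj hK (n - 1) n (by omega)
    (hFam g hFinj hK a hKb (n - 1)).1 (hFam g hFinj hK a hKb (n - 1)).2).2

lemma hFam_zero (g : K ⟶ F) (hFinj : ∀ n : ℤ, Injective (F.X n))
    (hK : ∀ n : ℤ, K.ExactAt n) (a : ℤ) (hKb : ∀ n : ℤ, n < a → IsZero (K.X n))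
    (n : ℤ) (hn : ¬ a < n) :
    (hFam g hFinj hK a hKb n).1 = 0 := by
  rw [hFam.eq_def, dif_neg hn]

lemma hFam_spec' (g : K ⟶ F) (hFinj : ∀ n : ℤ, Injective (F.X n))
    (hK : ∀ n : ℤ, K.ExactAt n) (a : ℤ) (hKb : ∀ n : ℤ, n < a → IsZero (K.X n))
    (n m : ℤ) (hm : m = n - 1) (hn : a < n) :
    (K.d m n ≫ (hFam g hFinj hK a hKb n).1) ≫ eqToHom (congrArg F.X hm.symm) =
      g.f m - (hFam g hFinj hK a hKb m).1 ≫ F.d (m - 1) m := by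
  subst hm
  simpa using hFam_spec g hFinj hK a hKb n hn

/-- Any chain map from a bounded-below acyclic cochain complex to a complex of
injectives is null-homotopic. -/
noncomputable def nullHomotopy (g : K ⟶ F) (hFinj : ∀ n : ℤ, Injective (F.X n))
    (hK : ∀ n : ℤ, K.ExactAt n) (a : ℤ) (hKb : ∀ n : ℤ, n < a → IsZero (K.X n)) :
    Homotopy g 0 where
  hom i j :=
    if hij : j = i - 1 then
      (hFam g hFinj hK a hKb i).1 ≫ eqToHom (congrArg F.X hij.symm)
    else 0
  zero i j h := by
    rw [dif_neg]
    intro hij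
    exact h (by simp only [ComplexShape.up_Rel]; omega)
  comm i := by
    rw [dNext_eq _ (show (ComplexShape.up ℤ).Rel i (i+1) by simp),
      prevD_eq _ (show (ComplexShape.up ℤ).Rel (i-1) i by simp)]
    rw [dif_pos (show i = (i+1) - 1 by omega), dif_pos rfl]
    simp only [eqToHom_refl, Category.comp_id, HomologicalComplex.zero_f_apply, add_zero]
    by_cases hi : a < i + 1
    · rw [← Category.assoc,
        hFam_spec' g hFinj hK a hKb (i+1) i (by omega) hi, sub_add_cancel]
    · rw [hFam_zero g hFinj hK a hKb (i+1) hi, hFam_zero g hFinj hK a hKb i (by omega),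
        zero_comp, comp_zero, zero_comp, add_zero]
      exact (hKb i (by omega)).eq_of_src _ _

/-- Vanishing of maps in the homotopy category out of a bounded-below acyclic complex
into a complex of injectives. -/
lemma hom_eq_zero {K F : CochainComplex A ℤ} (hFinj : ∀ n : ℤ, Injective (F.X n))
    (hK : ∀ n : ℤ, K.ExactAt n) (a : ℤ) (hKb : ∀ n : ℤ, n < a → IsZero (K.X n))
    (φ : (HomotopyCategory.quotient A (ComplexShape.up ℤ)).obj K ⟶
      (HomotopyCategory.quotient A (ComplexShape.up ℤ)).obj F) : φ = 0 := by
  obtain ⟨g, rfl⟩ := (HomotopyCategory.quotient A (ComplexShape.up ℤ)).map_surjective φ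
  rw [HomotopyCategory.eq_of_homotopy g 0 (nullHomotopy g hFinj hK a hKb),
    Functor.map_zero]

end QIHelper

open QIHelper Pretriangulated

/-- Let `A` be an abelian category and `f : E₁ ⟶ E₂` a quasi-isomorphism
of bounded cochain complexes.  Then for every bounded-below complex `F` of injective
objects, the induced map `f* : [E₂, F] → [E₁, F]` on homotopy classes of chain maps is a
bijection. -/
theorem quasiIso_induces_bijection_on_homotopy_classes_to_injectives
    {A : Type*} [Category A] [Abelian A]
    {E₁ E₂ : CochainComplex A ℤ} (f : E₁ ⟶ E₂) [QuasiIso f]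
    (hE₁ : ∃ a b : ℤ, ∀ n : ℤ, (n < a ∨ b < n) → IsZero (E₁.X n))
    (hE₂ : ∃ a b : ℤ, ∀ n : ℤ, (n < a ∨ b < n) → IsZero (E₂.X n))
    (F : CochainComplex A ℤ)
    (hFinj : ∀ n : ℤ, Injective (F.X n))
    (hFbdd : ∃ a : ℤ, ∀ n : ℤ, n < a → IsZero (F.X n)) :
    Function.Bijective
      (fun (g : (HomotopyCategory.quotient A (ComplexShape.up ℤ)).obj E₂ ⟶
          (HomotopyCategory.quotient A (ComplexShape.up ℤ)).obj F) =>
        (HomotopyCategory.quotient A (ComplexShape.up ℤ)).map f ≫ g) := by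
  obtain ⟨a₁, b₁, hE₁⟩ := hE₁
  obtain ⟨a₂, b₂, hE₂⟩ := hE₂
  set Q := HomotopyCategory.quotient A (ComplexShape.up ℤ) with hQ
  set Z := CochainComplex.mappingCone f with hZ
  have hT := HomotopyCategory.mappingCone_triangleh_distinguished f
  set T := CochainComplex.mappingCone.triangleh f with hTdef
  -- Z is acyclic
  have hZacy : (HomotopyCategory.subcategoryAcyclic A) (Q.obj Z) := by
    have hW : (HomotopyCategory.subcategoryAcyclic A).trW T.mor₁ := by
      show (HomotopyCategory.subcategoryAcyclic A).trW (Q.map f)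
      rw [← HomotopyCategory.quasiIso_eq_trW_subcategoryAcyclic]
      rw [hQ, HomotopyCategory.quotient_map_mem_quasiIso_iff,
        HomologicalComplex.mem_quasiIso_iff]
      infer_instance
    exact ((HomotopyCategory.subcategoryAcyclic A).trW_iff_of_distinguished T hT).1 hW
  have hZexact : ∀ n : ℤ, Z.ExactAt n :=
    (HomotopyCategory.quotient_obj_mem_subcategoryAcyclic_iff_exactAt Z).1 hZacy
  -- Z is bounded below
  set aZ : ℤ := min (a₁ - 1) a₂ with haZ
  have hZb : ∀ n : ℤ, n < aZ → IsZero (Z.X n) := by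
    intro n hn
    refine IsZero.of_iso ?_ (HomologicalComplex.homotopyCofiber.XIsoBiprod f n (n+1)
      (by simp))
    rw [biprod_isZero_iff]
    exact ⟨hE₁ (n+1) (Or.inl (by omega)), hE₂ n (Or.inl (by omega))⟩
  -- the shifted complex
  set Z' := (CategoryTheory.shiftFunctor (CochainComplex A ℤ) (-1 : ℤ)).obj Z with hZ'
  have e : Q.obj Z' ≅ (Q.obj Z)⟦(-1 : ℤ)⟧ := (Q.commShiftIso (-1 : ℤ)).app Z
  have hZ'acy : (HomotopyCategory.subcategoryAcyclic A) (Q.obj Z') :=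
    (HomotopyCategory.subcategoryAcyclic A).prop_of_iso e.symm ((HomotopyCategory.subcategoryAcyclic A).le_shift (-1) _ hZacy)
  have hZ'exact : ∀ n : ℤ, Z'.ExactAt n :=
    (HomotopyCategory.quotient_obj_mem_subcategoryAcyclic_iff_exactAt Z').1 hZ'acy
  have hZ'b : ∀ n : ℤ, n < aZ + 1 → IsZero (Z'.X n) := fun n hn =>
    hZb (n + (-1)) (by omega)
  -- vanishing
  have hvan : ∀ (φ : Q.obj Z ⟶ Q.obj F), φ = 0 := fun φ =>
    hom_eq_zero hFinj hZexact aZ hZb φ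
  have hvan' : ∀ (φ : (Q.obj Z)⟦(-1 : ℤ)⟧ ⟶ Q.obj F), φ = 0 := by
    intro φ
    have h := hom_eq_zero hFinj hZ'exact (aZ + 1) hZ'b (e.hom ≫ φ)
    calc φ = e.inv ≫ (e.hom ≫ φ) := by simp
    _ = 0 := by rw [h, comp_zero]
  constructor
  · intro g₁ g₂ hg
    have h0 : T.mor₁ ≫ (g₁ - g₂) = 0 := by
      show Q.map f ≫ (g₁ - g₂) = 0
      rw [Preadditive.comp_sub]
      dsimp only at hg
      rw [hg, sub_self]
    obtain ⟨x, hx⟩ := Triangle.yoneda_exact₂ T hT (g₁ - g₂) h0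
    have : x = 0 := hvan x
    rw [this, comp_zero] at hx
    exact sub_eq_zero.mp hx
  · intro g
    have hT' := inv_rot_of_distTriang T hT
    have h0 : T.invRotate.mor₁ ≫ g = 0 := hvan' _
    obtain ⟨x, hx⟩ := Triangle.yoneda_exact₂ T.invRotate hT' g h0
    exact ⟨x, hx.symm⟩
end
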